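/- arXiv:2405.05631 — 5 statements merged into one kernel-verified Lean document; each statement's English description precedes it below -/
import Mathlib

section
/- Let $V$ be a representation of $\mathfrak{o}_N$ and let $v$ be a weight vector of weight $\mu$ (i.e. $F_{ii}v = \mu(F_{ii})v$ for all $i$). For a subset $I \subset \{-n,\dots,n\}$ of even cardinality, define the noncommutative pfaffian $\mathrm{Pf}\,F_I = \frac{1}{(k/2)!\,2^{k/2}}\sum_{\sigma\in S_k}\mathrm{sgn}(\sigma)\, F_{-\sigma(i_1),\sigma(i_2)}\cdots F_{-\sigma(i_{k-1}),\sigma(i_k)} \in U(\mathfrak{o}_N)$ where $I = \{i_1 < \cdots < i_k\}$. Then $\mathrm{Pf}\,F_I \cdot v$ is a weight vector of weight $\mu - \sum_{i\in I} e_i$ (or zero). -/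
open scoped BigOperators

/-- Index set `{-n, …, n}` for the split orthogonal Lie algebra `o_{2n+1}`. -/
abbrev Idx (n : ℕ) : Type := {i : ℤ // i ∈ Finset.Icc (-(n : ℤ)) (n : ℤ)}

namespace Idx
/-- Negation on the index set. -/
def neg {n : ℕ} (i : Idx n) : Idx n :=
  ⟨-i.1, by have := i.2; simp only [Finset.mem_Icc] at *; omega⟩
end Idx

/-- Noncommutative pfaffian of `F` along an enumeration `e : Fin (2m) → Idx n`:
`Pf = 1/(m! 2^m) ∑_σ sgn σ · F_{-e(σ 1), e(σ 2)} ⋯ F_{-e(σ(2m-1)), e(σ(2m))}`. -/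
noncomputable def PfEnum {A : Type*} [Ring A] [Algebra ℚ A] {n : ℕ}
    (F : Idx n → Idx n → A) (m : ℕ) (e : Fin (2 * m) → Idx n) : A :=
  ((m.factorial : ℚ) * 2 ^ m)⁻¹ •
    ∑ σ : Equiv.Perm (Fin (2 * m)),
      (Equiv.Perm.sign σ : ℤ) •
        (List.ofFn fun t : Fin m =>
          F (Idx.neg (e (σ ⟨2 * t.1, by have := t.2; omega⟩)))
            (e (σ ⟨2 * t.1 + 1, by have := t.2; omega⟩))).prod

/-- Noncommutative pfaffian `Pf F_I` of an (even-cardinality) indexing set `I`,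
using the increasing enumeration of `I`. -/
noncomputable def PfSet {A : Type*} [Ring A] [Algebra ℚ A] {n : ℕ}
    (F : Idx n → Idx n → A) (I : Finset (Idx n)) : A :=
  PfEnum F (I.card / 2) fun t =>
    (I.orderIsoOfFin rfl ⟨t.1, by have := t.2; omega⟩).1

/-- The defining commutation relations of the generators `F_{ij}` of `o_N`. -/
def OrthRel {A : Type*} [Ring A] {n : ℕ} (F : Idx n → Idx n → A) : Prop :=
  ∀ i j k l : Idx n,
    F i j * F k l - F k l * F i j =
      (if k = j then F i l else 0) - (if i = l then F k j else 0)
        - (if Idx.neg k = i then F (Idx.neg j) l else 0)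
        + (if Idx.neg l = j then F k (Idx.neg i) else 0)

/-- The skew-symmetry `F_{ij} = -F_{-j,-i}` of the generators. -/
def OrthSkew {A : Type*} [Ring A] {n : ℕ} (F : Idx n → Idx n → A) : Prop :=
  ∀ i j : Idx n, F i j = - F (Idx.neg j) (Idx.neg i)

/-- Sign of an arrangement (list) of elements of a linearly ordered type:
`(-1)^(number of inversions)`. -/
def arrSign {ι : Type*} [LinearOrder ι] (l : List ι) : ℤ :=
  (-1) ^ (((Finset.univ : Finset (Fin l.length × Fin l.length)).filter
      fun p => p.1 < p.2 ∧ l.get p.2 < l.get p.1).card)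

/-- Shuffle sign `(-1)^{(I'I'')}` of the permutation placing `I'` (in natural order)
before `I''` (in natural order). -/
def shuffleSign {ι : Type*} [LinearOrder ι] (I' I'' : Finset ι) : ℤ :=
  arrSign (I'.sort (· ≤ ·) ++ I''.sort (· ≤ ·))

lemma Idx.negneg {n : ℕ} (i : Idx n) : Idx.neg (Idx.neg i) = i := Subtype.ext (neg_neg _)
def cc {n : ℕ} (i k l : Idx n) : ℚ :=
  (if k = i then 1 else 0) - (if l = i then 1 else 0)
    - (if Idx.neg k = i then 1 else 0) + (if Idx.neg l = i then 1 else 0)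
def ff {n : ℕ} (i x : Idx n) : ℚ :=
  (if Idx.neg x = i then 1 else 0) - (if x = i then 1 else 0)
lemma cc_eq {n : ℕ} (i x y : Idx n) : cc i (Idx.neg x) y = ff i x + ff i y := by
  unfold cc ff; rw [Idx.negneg]; ring

section
variable {n : ℕ} {V : Type*} [AddCommGroup V] [Module ℚ V]

lemma comm_diag {ρ : Idx n → Idx n → Module.End ℚ V} (hrel : OrthRel ρ)
    (i k l : Idx n) :
    ρ i i * ρ k l = ρ k l * ρ i i + cc i k l • ρ k l := by
  have h := hrel i i k l
  rw [sub_eq_iff_eq_add] at h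
  rw [h, add_comm]
  congr 1
  have ha : (if k = i then ρ i l else 0) = (if k = i then (1:ℚ) else 0) • ρ k l := by
    by_cases h1 : k = i
    · subst h1; simp
    · simp [h1]
  have hb : (if i = l then ρ k i else 0) = (if l = i then (1:ℚ) else 0) • ρ k l := by
    by_cases h1 : i = l
    · subst h1; simp
    · rw [if_neg h1, if_neg (fun hh => h1 hh.symm), zero_smul]
  have hc : (if Idx.neg k = i then ρ (Idx.neg i) l else 0)
      = (if Idx.neg k = i then (1:ℚ) else 0) • ρ k l := by
    by_cases h1 : Idx.neg k = i
    · rw [if_pos h1, if_pos h1, ← h1, Idx.negneg, one_smul]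
    · simp [h1]
  have hd : (if Idx.neg l = i then ρ k (Idx.neg i) else 0)
      = (if Idx.neg l = i then (1:ℚ) else 0) • ρ k l := by
    by_cases h1 : Idx.neg l = i
    · rw [if_pos h1, if_pos h1, ← h1, Idx.negneg, one_smul]
    · simp [h1]
  rw [ha, hb, hc, hd]
  unfold cc
  module

lemma comm_apply {ρ : Idx n → Idx n → Module.End ℚ V} (hrel : OrthRel ρ)
    (i k l : Idx n) (w : V) :
    ρ i i (ρ k l w) = ρ k l (ρ i i w) + cc i k l • ρ k l w := by
  have := DFunLike.congr_fun (comm_diag hrel i k l) w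
  simpa [Module.End.mul_apply, LinearMap.add_apply, LinearMap.smul_apply] using this

lemma prod_weight {ρ : Idx n → Idx n → Module.End ℚ V} (hrel : OrthRel ρ)
    (i : Idx n) :
    ∀ (L : List (Idx n × Idx n)) (w : V) (d : ℚ), ρ i i w = d • w →
      ρ i i ((L.map fun p => ρ p.1 p.2).prod w)
        = ((L.map fun p => cc i p.1 p.2).sum + d) • (L.map fun p => ρ p.1 p.2).prod w := by
  intro L
  induction L with
  | nil => intro w d hw; simpa using hw
  | cons p L ih =>
    intro w d hw
    simp only [List.map_cons, List.prod_cons, List.sum_cons, Module.End.mul_apply]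
    rw [comm_apply hrel, ih w d hw, map_smul]
    module

def pairEquiv (m : ℕ) : Fin m × Fin 2 ≃ Fin (2 * m) where
  toFun p := ⟨2 * p.1.1 + p.2.1, by have := p.1.2; have := p.2.2; omega⟩
  invFun u := (⟨u.1 / 2, by have := u.2; omega⟩, ⟨u.1 % 2, by omega⟩)
  left_inv p := by
    obtain ⟨⟨a, ha⟩, ⟨b, hb⟩⟩ := p
    simp only [Prod.mk.injEq, Fin.mk.injEq]
    omega
  right_inv u := by
    obtain ⟨a, ha⟩ := u
    simp only [Fin.mk.injEq]
    omega

lemma sum_pair {m : ℕ} (g : Fin (2 * m) → ℚ) :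
    ∑ t : Fin m, (g ⟨2 * t.1, by omega⟩ + g ⟨2 * t.1 + 1, by omega⟩) = ∑ u, g u := by
  rw [← Equiv.sum_comp (pairEquiv m) g, Fintype.sum_prod_type]
  refine Finset.sum_congr rfl fun t _ => ?_
  rw [Fin.sum_univ_two]
  rfl

lemma pf_enum_weight {ρ : Idx n → Idx n → Module.End ℚ V} (hrel : OrthRel ρ)
    (μ : Idx n → ℚ) (v : V) (hv : ∀ i, ρ i i v = μ i • v)
    (m : ℕ) (e : Fin (2 * m) → Idx n) (i : Idx n) :
    ρ i i (PfEnum ρ m e v)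
      = (μ i + ∑ u : Fin (2 * m), ff i (e u)) • PfEnum ρ m e v := by
  have hterm : ∀ σ : Equiv.Perm (Fin (2 * m)),
      ρ i i ((List.ofFn fun t : Fin m =>
          ρ (Idx.neg (e (σ ⟨2 * t.1, by have := t.2; omega⟩)))
            (e (σ ⟨2 * t.1 + 1, by have := t.2; omega⟩))).prod v)
        = (μ i + ∑ u : Fin (2 * m), ff i (e u)) •
          (List.ofFn fun t : Fin m =>
            ρ (Idx.neg (e (σ ⟨2 * t.1, by have := t.2; omega⟩)))
              (e (σ ⟨2 * t.1 + 1, by have := t.2; omega⟩))).prod v := by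
    intro σ
    have hlist : (List.ofFn fun t : Fin m =>
          ρ (Idx.neg (e (σ ⟨2 * t.1, by have := t.2; omega⟩)))
            (e (σ ⟨2 * t.1 + 1, by have := t.2; omega⟩)))
        = List.map (fun p : Idx n × Idx n => ρ p.1 p.2)
            (List.ofFn fun t : Fin m =>
              (Idx.neg (e (σ ⟨2 * t.1, by have := t.2; omega⟩)),
                e (σ ⟨2 * t.1 + 1, by have := t.2; omega⟩))) := by
      rw [List.map_ofFn]; rfl
    rw [hlist, prod_weight hrel i _ v (μ i) (hv i)]
    congr 1
    rw [List.map_ofFn, List.sum_ofFn]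
    have h1 : ∑ t : Fin m,
        ((fun p : Idx n × Idx n => cc i p.1 p.2) ∘ fun t : Fin m =>
          (Idx.neg (e (σ ⟨2 * t.1, by have := t.2; omega⟩)),
            e (σ ⟨2 * t.1 + 1, by have := t.2; omega⟩))) t
        = ∑ t : Fin m, (ff i (e (σ ⟨2 * t.1, by have := t.2; omega⟩))
            + ff i (e (σ ⟨2 * t.1 + 1, by have := t.2; omega⟩))) :=
      Finset.sum_congr rfl fun t _ => cc_eq _ _ _
    rw [h1, sum_pair (fun u => ff i (e (σ u))), Equiv.sum_comp σ (fun u => ff i (e u))]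
    ring
  unfold PfEnum
  simp only [LinearMap.smul_apply, LinearMap.sum_apply]
  rw [map_smul, map_sum]
  rw [Finset.sum_congr rfl (fun σ _ => by
    rw [map_zsmul, hterm σ, smul_comm ((Equiv.Perm.sign σ : ℤ))])]
  rw [← Finset.smul_sum, smul_comm]

end

/-- the pfaffian `Pf F_I` maps a weight vector of weight `μ` to a weight
vector of weight `μ - ∑_{i ∈ I} e_i` (or zero); here the functional `∑_{i∈I} e_i` is
evaluated at `F_{ii}` as `(if i ∈ I then 1 else 0) - (if -i ∈ I then 1 else 0)`. -/
theorem statement3 (n : ℕ) {V : Type*} [AddCommGroup V] [Module ℚ V]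
    (ρ : Idx n → Idx n → Module.End ℚ V)
    (hrel : OrthRel ρ) (hskew : OrthSkew ρ)
    (μ : Idx n → ℚ) (v : V) (hv : ∀ i, ρ i i v = μ i • v)
    (I : Finset (Idx n)) (m : ℕ) (hI : I.card = 2 * m) :
    ∀ i : Idx n, ρ i i (PfSet ρ I v) =
      (μ i - ((if i ∈ I then (1 : ℚ) else 0) - (if Idx.neg i ∈ I then 1 else 0)))
        • PfSet ρ I v := by
  intro i
  have h2m : 2 * (I.card / 2) = I.card := by omega
  have key := pf_enum_weight hrel μ v hv (I.card / 2)
    (fun t => (I.orderIsoOfFin rfl ⟨t.1, by have := t.2; omega⟩).1) i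
  have hsum : ∑ u : Fin (2 * (I.card / 2)),
      ff i ((I.orderIsoOfFin rfl ⟨u.1, by have := u.2; omega⟩ : I) : Idx n)
      = ∑ x ∈ I, ff i x := by
    rw [← Finset.sum_coe_sort I (ff i)]
    rw [← Equiv.sum_comp (I.orderIsoOfFin rfl).toEquiv (fun x : I => ff i x.1)]
    rw [← Equiv.sum_comp (finCongr h2m)
        (fun w : Fin I.card => ff i (((I.orderIsoOfFin rfl).toEquiv w : I) : Idx n))]
    rfl
  have hI' : ∑ x ∈ I, ff i x
      = (if Idx.neg i ∈ I then (1:ℚ) else 0) - (if i ∈ I then 1 else 0) := by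
    have hiff : ∀ x : Idx n, (Idx.neg x = i) ↔ (x = Idx.neg i) :=
      fun x => ⟨fun h => by rw [← h, Idx.negneg], fun h => by rw [h, Idx.negneg]⟩
    unfold ff
    rw [Finset.sum_sub_distrib]
    simp only [hiff]
    rw [Finset.sum_ite_eq' I (Idx.neg i) (fun _ => 1),
      Finset.sum_ite_eq' I i (fun _ => 1)]
  unfold PfSet
  rw [key, hsum, hI']
  ring_nf
end

section
/- Let $I = \{i_1,\dots,i_k\}\subset\{-n,\dots,n\}$ with $k$ even, and let $j_1, j_2 \in \{-n,\dots,n\}$ with $j_1, j_2 \notin I$. Then in $U(\mathfrak{o}_N)$ the commutator $[\mathrm{Pf}\,F_I, F_{j_1,-j_2}] = 0$. -/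
open scoped BigOperators

lemma Idx.neg_inj {n : ℕ} {a b : Idx n} (h : Idx.neg a = Idx.neg b) : a = b := by
  apply Subtype.ext
  have := congrArg Subtype.val h
  simp only [Idx.neg] at this
  omega

lemma Idx.neg_neg {n : ℕ} (a : Idx n) : Idx.neg (Idx.neg a) = a := by
  apply Subtype.ext; simp [Idx.neg]

/-- if `j₁, j₂ ∉ I` then `[Pf F_I, F_{j₁,-j₂}] = 0` in `U(o_N)` (formulated in an
arbitrary associative ℚ-algebra whose elements `F i j` satisfy the defining relations of
`U(o_N)`). -/
theorem statement4 {A : Type*} [Ring A] [Algebra ℚ A] (n : ℕ)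
    (F : Idx n → Idx n → A) (hrel : OrthRel F) (hskew : OrthSkew F)
    (I : Finset (Idx n)) (hI : Even I.card)
    (j1 j2 : Idx n) (h1 : j1 ∉ I) (h2 : j2 ∉ I) :
    PfSet F I * F j1 (Idx.neg j2) - F j1 (Idx.neg j2) * PfSet F I = 0 := by
  set X := F j1 (Idx.neg j2) with hX
  have key : ∀ a b : Idx n, a ∈ I → b ∈ I → Commute X (F (Idx.neg a) b) := by
    intro a b ha hb
    have h := hrel (Idx.neg a) b j1 (Idx.neg j2)
    rw [if_neg, if_neg, if_neg, if_neg] at h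
    · have : F (Idx.neg a) b * X - X * F (Idx.neg a) b = 0 := by
        rw [h]; simp
      exact (sub_eq_zero.mp this).symm
    · rw [Idx.neg_neg]; intro h'; exact h2 (h' ▸ hb)
    · intro h'; exact h1 ((Idx.neg_inj h') ▸ ha)
    · intro h'; exact h2 ((Idx.neg_inj h') ▸ ha)
    · intro h'; exact h1 (h' ▸ hb)
  have hPf : Commute X (PfSet F I) := by
    unfold PfSet PfEnum
    apply Commute.smul_right
    apply Commute.sum_right
    intro σ _
    apply Commute.smul_right
    apply Commute.list_prod_right
    intro x hx
    rw [List.mem_ofFn] at hx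
    obtain ⟨t, rfl⟩ := hx
    exact key _ _ (I.orderIsoOfFin rfl _).2 (I.orderIsoOfFin rfl _).2
  rw [sub_eq_zero]
  exact hPf.symm.eq
end

section
/- Let $I = \{i_1,\dots,i_k\}\subset\{-n,\dots,n\}$ with $k$ even, and let $j_1 \in I$, $j_2 \notin I$. Then in $U(\mathfrak{o}_N)$ one has $[\mathrm{Pf}\,F_I, F_{j_1,-j_2}] = \mathrm{Pf}\,F_{I_{j_1\to -j_2}}$, where $I_{j_1\to -j_2}$ denotes the indexing set obtained from $I$ by replacing $j_1$ with $-j_2$ (with the pfaffian understood via the polyvector identification, i.e. with the sign of reordering the new set). -/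
open scoped BigOperators

namespace Idx
lemma neg_neg' {n : ℕ} (i : Idx n) : i.neg.neg = i := Subtype.ext (by simp [Idx.neg])

lemma neg_inj' {n : ℕ} {i j : Idx n} (h : i.neg = j.neg) : i = j := by
  have := congrArg Idx.neg h; rwa [neg_neg', neg_neg'] at this
end Idx

section auxlemmas
variable {A : Type*} [Ring A]

private lemma list_prod_comm' (x : A) : ∀ (l : List A), (∀ a ∈ l, a * x = x * a) → l.prod * x = x * l.prod
  | [], _ => by simp
  | a :: l, h => by
      rw [List.prod_cons, mul_assoc, list_prod_comm' x l (fun b hb => h b (.tail _ hb)),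
        ← mul_assoc, h a (.head _), mul_assoc]

private lemma prod_comm_single (x : A) :
    ∀ (N : ℕ) (f g : Fin N → A) (t0 : Fin N),
      (∀ t, t ≠ t0 → g t = f t ∧ f t * x = x * f t) →
      (f t0 * x - x * f t0 = g t0) →
      (List.ofFn f).prod * x - x * (List.ofFn f).prod = (List.ofFn g).prod := by
  intro N
  induction N with
  | zero => intro f g t0; exact absurd t0.2 (by omega)
  | succ N ih =>
    intro f g t0 hne ht0
    rw [List.ofFn_succ, List.ofFn_succ, List.prod_cons, List.prod_cons]
    rcases Fin.eq_zero_or_eq_succ t0 with h0 | ⟨s, rfl⟩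
    · subst h0
      have hcomm : (List.ofFn fun i : Fin N => f i.succ).prod * x
          = x * (List.ofFn fun i : Fin N => f i.succ).prod := by
        apply list_prod_comm'
        intro a ha
        rw [List.mem_ofFn] at ha
        obtain ⟨i, rfl⟩ := ha
        exact (hne i.succ (Fin.succ_ne_zero i)).2
      have hg : (List.ofFn fun i : Fin N => g i.succ) = List.ofFn fun i : Fin N => f i.succ := by
        congr 1
        funext i
        exact (hne _ (Fin.succ_ne_zero _)).1
      rw [hg, mul_assoc, hcomm, ← mul_assoc, ← mul_assoc, ← sub_mul, ht0]
    · have hIH := ih (fun i => f i.succ) (fun i => g i.succ) s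
        (fun t ht => hne t.succ (by simpa [Fin.succ_inj] using ht)) ht0
      rw [(hne 0 (Fin.succ_ne_zero s).symm).1, mul_assoc, ← mul_assoc x,
        ← (hne 0 (Fin.succ_ne_zero s).symm).2, mul_assoc, ← mul_sub, hIH]

private lemma factor_comm {n : ℕ} {F : Idx n → Idx n → A}
    (hrel : OrthRel F) (hskew : OrthSkew F) (j1 j2 a b : Idx n)
    (ha2 : a ≠ j2) (hb2 : b ≠ j2) :
    F (Idx.neg a) b * F j1 (Idx.neg j2) - F j1 (Idx.neg j2) * F (Idx.neg a) b
      = (if b = j1 then F (Idx.neg a) (Idx.neg j2) else 0)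
        + (if a = j1 then F j2 b else 0) := by
  have h := hrel (Idx.neg a) b j1 (Idx.neg j2)
  rw [if_neg (fun hc => ha2 (Idx.neg_inj' hc)),
    if_neg (fun hc : Idx.neg (Idx.neg j2) = b => hb2 (by rw [Idx.neg_neg'] at hc; exact hc.symm))] at h
  have hiff : (Idx.neg j1 = Idx.neg a) = (a = j1) :=
    propext ⟨fun hc => (Idx.neg_inj' hc).symm, fun hc => by rw [hc]⟩
  have hiff2 : (j1 = b) = (b = j1) := propext eq_comm
  simp only [hiff, hiff2] at h
  rw [h, show F j2 b = -F (Idx.neg b) (Idx.neg j2) from hskew j2 b]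
  by_cases ha : a = j1 <;> by_cases hb : b = j1 <;> simp [ha, hb] <;> abel

private lemma PfSet_eq {n : ℕ}
    [Algebra ℚ A] (F : Idx n → Idx n → A) (I : Finset (Idx n)) (m : ℕ) (hI : I.card = 2 * m) :
    PfSet F I = PfEnum F m fun t => ((I.orderIsoOfFin hI) t).1 := by
  obtain rfl : m = I.card / 2 := by omega
  unfold PfSet
  congr 1

private lemma PfEnum_comm {n : ℕ} [Algebra ℚ A]
    (F : Idx n → Idx n → A) (hrel : OrthRel F) (hskew : OrthSkew F)
    (m : ℕ) (e : Fin (2*m) → Idx n) (he : Function.Injective e)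
    (j1 j2 : Idx n) (s0 : Fin (2*m)) (hs0 : e s0 = j1)
    (hj2 : ∀ s, e s ≠ j2) :
    PfEnum F m e * F j1 (Idx.neg j2) - F j1 (Idx.neg j2) * PfEnum F m e
      = PfEnum F m (fun t => if e t = j1 then Idx.neg j2 else e t) := by
  unfold PfEnum
  rw [smul_mul_assoc, mul_smul_comm, ← smul_sub]
  congr 1
  rw [Finset.sum_mul, Finset.mul_sum, ← Finset.sum_sub_distrib]
  refine Finset.sum_congr rfl fun σ _ => ?_
  rw [smul_mul_assoc, mul_smul_comm, ← smul_sub]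
  congr 1
  set x := F j1 (Idx.neg j2) with hx
  have hes : ∀ s : Fin (2*m), e (σ s) = j1 ↔ s = σ.symm s0 := by
    intro s
    constructor
    · intro h
      have : σ s = s0 := he (h.trans hs0.symm)
      rw [← this]; exact (Equiv.symm_apply_apply σ s).symm
    · rintro rfl; rw [Equiv.apply_symm_apply]; exact hs0
  set s1 : Fin (2*m) := σ.symm s0 with hs1
  have hlt : s1.1 / 2 < m := by have := s1.2; omega
  refine prod_comm_single x m _ _ ⟨s1.1 / 2, hlt⟩ ?_ ?_
  · intro t ht
    have htv : t.1 ≠ s1.1 / 2 := fun hc => ht (Fin.ext hc)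
    have hA : e (σ ⟨2 * t.1, by have := t.2; omega⟩) ≠ j1 := by
      intro hc
      have : 2 * t.1 = s1.1 := congrArg Fin.val ((hes _).mp hc)
      omega
    have hB : e (σ ⟨2 * t.1 + 1, by have := t.2; omega⟩) ≠ j1 := by
      intro hc
      have : 2 * t.1 + 1 = s1.1 := congrArg Fin.val ((hes _).mp hc)
      omega
    constructor
    · simp only [if_neg hA, if_neg hB]
    · have h := factor_comm hrel hskew j1 j2 (e (σ ⟨2 * t.1, by have := t.2; omega⟩))
        (e (σ ⟨2 * t.1 + 1, by have := t.2; omega⟩)) (hj2 _) (hj2 _)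
      rw [if_neg hB, if_neg hA, add_zero] at h
      exact sub_eq_zero.mp h
  · have ht0 : s1.1 = 2 * (s1.1 / 2) ∨ s1.1 = 2 * (s1.1 / 2) + 1 := by omega
    have h := factor_comm hrel hskew j1 j2
      (e (σ ⟨2 * (s1.1 / 2), by omega⟩)) (e (σ ⟨2 * (s1.1 / 2) + 1, by omega⟩))
      (hj2 _) (hj2 _)
    rw [h]
    rcases ht0 with hcase | hcase
    · have hA : e (σ ⟨2 * (s1.1 / 2), by omega⟩) = j1 := by
        exact (hes _).mpr (Fin.ext hcase.symm)
      have hB : e (σ ⟨2 * (s1.1 / 2) + 1, by omega⟩) ≠ j1 := by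
        intro hc; have : 2 * (s1.1/2) + 1 = s1.1 := congrArg Fin.val ((hes _).mp hc); omega
      simp only [if_pos hA, if_neg hB, zero_add, Idx.neg_neg']
    · have hA : e (σ ⟨2 * (s1.1 / 2), by omega⟩) ≠ j1 := by
        intro hc; have : 2 * (s1.1/2) = s1.1 := congrArg Fin.val ((hes _).mp hc); omega
      have hB : e (σ ⟨2 * (s1.1 / 2) + 1, by omega⟩) = j1 := by
        exact (hes _).mpr (Fin.ext hcase.symm)
      simp only [if_pos hB, if_neg hA, add_zero]
end auxlemmas

/-- if `j₁ ∈ I`, `j₂ ∉ I`, then `[Pf F_I, F_{j₁,-j₂}] = Pf F_{I_{j₁ → -j₂}}`,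
where the pfaffian of the replaced indexing set is understood via the polyvector
identification, i.e. as the pfaffian along the enumeration of `I` in which the entry `j₁`
has been replaced by `-j₂` (no reordering: the reordering sign is built in). -/
theorem statement5 {A : Type*} [Ring A] [Algebra ℚ A] (n : ℕ)
    (F : Idx n → Idx n → A) (hrel : OrthRel F) (hskew : OrthSkew F)
    (I : Finset (Idx n)) (m : ℕ) (hI : I.card = 2 * m)
    (j1 j2 : Idx n) (h1 : j1 ∈ I) (h2 : j2 ∉ I) :
    PfSet F I * F j1 (Idx.neg j2) - F j1 (Idx.neg j2) * PfSet F I =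
      PfEnum F m (fun t =>
        if ((I.orderIsoOfFin hI) t).1 = j1 then Idx.neg j2
        else ((I.orderIsoOfFin hI) t).1) := by
  rw [PfSet_eq F I m hI]
  exact PfEnum_comm F hrel hskew m (fun t => ((I.orderIsoOfFin hI) t).1)
    (fun a b h => (I.orderIsoOfFin hI).injective (Subtype.ext h))
    j1 j2 ((I.orderIsoOfFin hI).symm ⟨j1, h1⟩)
    (congrArg Subtype.val ((I.orderIsoOfFin hI).apply_symm_apply ⟨j1, h1⟩))
    (fun s hc => h2 (hc ▸ ((I.orderIsoOfFin hI) s).2))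
end

section
/- Let $I = \{i_1,\dots,i_k\}$ with $k$ even, and fix even numbers $p, q \geq 0$ with $p + q = k$. Then in $U(\mathfrak{o}_N)$ the splitting formula holds: $\mathrm{Pf}\,F_I = \frac{(p/2)!\,(q/2)!}{(k/2)!}\sum_{I = I'\sqcup I'',\ |I'| = p,\ |I''| = q} (-1)^{(I'I'')}\,\mathrm{Pf}\,F_{I'}\,\mathrm{Pf}\,F_{I''}$, where $(-1)^{(I'I'')}$ is the sign of the permutation of $I$ placing the elements of $I'$ first (in natural order) followed by those of $I''$ (in natural order). -/
open scoped BigOperators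

/-
Every `σ ∈ S_{2m}` factors uniquely as a shuffle `ρ_T`, sending the first `2p` positions
increasingly onto a `2p`-subset `T` and the last `2q` increasingly onto `Tᶜ`, composed with a
permutation of each block. The word `F_{-σ(1),σ(2)} ⋯ F_{-σ(2m-1),σ(2m)}` is the word of the
first `p` pairs times the word of the last `q` pairs, so the signed sum over `S_{2m}` becomes
`∑_T sgn ρ_T · (signed sum over S_{2p}) · (signed sum over S_{2q})`, and `sgn ρ_T`, counted by
inversions, is the shuffle sign. Comparing the normalisations `1/(m! 2^m)` and
`1/(p! 2^p q! 2^q)` produces the factor `p! q! / m!`.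
-/

open Finset Equiv

section Inversions

variable {ι : Type*} [LinearOrder ι]

theorem Equiv.Perm.sign_eq_neg_one_pow_card_inversions {k : ℕ} (σ : Perm (Fin k)) :
    Perm.sign σ = (-1) ^ #{p : Fin k × Fin k | p.1 < p.2 ∧ σ p.2 < σ p.1} := by
  have hpairs : ∏ i, ∏ j ∈ Ioi i, (if σ i < σ j then 1 else -1 : ℤˣ)
      = ∏ p : Fin k × Fin k with p.1 < p.2, (if σ p.1 < σ p.2 then 1 else -1 : ℤˣ) := by
    simp only [← filter_lt_eq_Ioi, prod_filter, Fintype.prod_prod_type]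
  have hinv : ∀ p : Fin k × Fin k, p.1 < p.2 ∧ ¬ σ p.1 < σ p.2 ↔ p.1 < p.2 ∧ σ p.2 < σ p.1 :=
    fun p => and_congr_right fun hp =>
      ⟨fun h => lt_of_le_of_ne (not_lt.mp h) (σ.injective.ne hp.ne'), fun h => h.not_gt⟩
  rw [σ.sign_eq_prod_prod_Ioi, hpairs, prod_ite, prod_const_one, one_mul, prod_const,
    filter_filter]
  simp only [hinv]

theorem arrSign_ofFn {k : ℕ} (f : Fin k → ι) :
    arrSign (List.ofFn f) = (-1) ^ #{p : Fin k × Fin k | p.1 < p.2 ∧ f p.2 < f p.1} := by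
  have key : ∀ (l : List ι) (h : l.length = k), arrSign l =
      (-1) ^ #{p : Fin k × Fin k | p.1 < p.2 ∧ l[p.2.1] < l[p.1.1]} := by
    rintro l rfl
    rfl
  rw [key _ List.length_ofFn]
  simp only [List.getElem_ofFn]

theorem arrSign_ofFn_comp_perm {k : ℕ} {f : Fin k → ι} (hf : StrictMono f) (σ : Perm (Fin k)) :
    arrSign (List.ofFn (f ∘ σ)) = Perm.sign σ := by
  rw [arrSign_ofFn, Perm.sign_eq_neg_one_pow_card_inversions]
  simp only [Function.comp_apply, hf.lt_iff_lt]
  push_cast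
  rfl

end Inversions

section Shuffle

variable {a b n : ℕ}

lemma card_compl_eq_of_add {T : Finset (Fin n)} (h : a + b = n) (hT : #T = a) : #Tᶜ = b := by
  rw [card_compl, Fintype.card_fin, hT]; omega

variable (h : a + b = n)

def finSumFinEquivOfAdd : Fin a ⊕ Fin b ≃ Fin n := finSumFinEquiv.trans (finCongr h)

@[simp]
lemma finSumFinEquivOfAdd_inl (u : Fin a) : (finSumFinEquivOfAdd h (.inl u) : ℕ) = u := rfl

@[simp]
lemma finSumFinEquivOfAdd_inr (v : Fin b) : (finSumFinEquivOfAdd h (.inr v) : ℕ) = a + v := rfl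

variable {T : Finset (Fin n)} (hT : #T = a)

def shufflePerm : Perm (Fin n) :=
  (finSumFinEquivOfAdd h).symm.trans
    ((Equiv.sumCongr (T.orderIsoOfFin hT).toEquiv
        ((Tᶜ.orderIsoOfFin (card_compl_eq_of_add h hT)).toEquiv.trans
          (Equiv.subtypeEquivRight fun _ => mem_compl))).trans
      (Equiv.sumCompl (· ∈ T)))

lemma shufflePerm_inl (u : Fin a) :
    shufflePerm h hT (finSumFinEquivOfAdd h (.inl u)) = T.orderEmbOfFin hT u := by
  simp [shufflePerm, ← coe_orderIsoOfFin_apply]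

lemma shufflePerm_inr (v : Fin b) :
    shufflePerm h hT (finSumFinEquivOfAdd h (.inr v)) =
      Tᶜ.orderEmbOfFin (card_compl_eq_of_add h hT) v := by
  simp [shufflePerm, ← coe_orderIsoOfFin_apply]

lemma ofFn_comp_shufflePerm {β : Type*} (f : Fin n → β) :
    List.ofFn (f ∘ shufflePerm h hT) =
      List.ofFn (f ∘ T.orderEmbOfFin hT) ++
        List.ofFn (f ∘ Tᶜ.orderEmbOfFin (card_compl_eq_of_add h hT)) := by
  rw [List.ofFn_congr h.symm, List.ofFn_add]
  congr 1 <;> congr 1 <;> funext i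
  · exact congrArg f (shufflePerm_inl h hT i)
  · exact congrArg f (shufflePerm_inr h hT i)

def blockShuffle (τ₁ : Perm (Fin a)) (τ₂ : Perm (Fin b)) : Perm (Fin n) :=
  shufflePerm h hT * (finSumFinEquivOfAdd h).permCongr (τ₁.sumCongr τ₂)

lemma blockShuffle_inl (τ₁ : Perm (Fin a)) (τ₂ : Perm (Fin b)) (u : Fin a) :
    blockShuffle h hT τ₁ τ₂ (finSumFinEquivOfAdd h (.inl u)) = T.orderEmbOfFin hT (τ₁ u) := by
  simp [blockShuffle, shufflePerm_inl]

lemma blockShuffle_inr (τ₁ : Perm (Fin a)) (τ₂ : Perm (Fin b)) (v : Fin b) :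
    blockShuffle h hT τ₁ τ₂ (finSumFinEquivOfAdd h (.inr v)) =
      Tᶜ.orderEmbOfFin (card_compl_eq_of_add h hT) (τ₂ v) := by
  simp [blockShuffle, shufflePerm_inr]

lemma sign_blockShuffle (τ₁ : Perm (Fin a)) (τ₂ : Perm (Fin b)) :
    Perm.sign (blockShuffle h hT τ₁ τ₂) =
      Perm.sign (shufflePerm h hT) * (Perm.sign τ₁ * Perm.sign τ₂) := by
  rw [blockShuffle, Perm.sign_mul, Perm.sign_permCongr, Perm.sign_sumCongr]

lemma image_blockShuffle_inl (τ₁ : Perm (Fin a)) (τ₂ : Perm (Fin b)) :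
    univ.image (fun u => blockShuffle h hT τ₁ τ₂ (finSumFinEquivOfAdd h (.inl u))) = T := by
  simp only [blockShuffle_inl]
  change univ.image (T.orderEmbOfFin hT ∘ τ₁) = T
  rw [← image_image, image_univ_equiv, image_orderEmbOfFin_univ]

lemma bijective_blockShuffle :
    Function.Bijective fun x : {T : Finset (Fin n) // #T = a} × Perm (Fin a) × Perm (Fin b) =>
      blockShuffle h x.1.2 x.2.1 x.2.2 := by
  refine (Fintype.bijective_iff_injective_and_card _).mpr ⟨?_, ?_⟩
  · rintro ⟨⟨T, hT⟩, τ₁, τ₂⟩ ⟨⟨T', hT'⟩, τ₁', τ₂'⟩ heq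
    obtain rfl : T = T' := by
      rw [← image_blockShuffle_inl h hT τ₁ τ₂, ← image_blockShuffle_inl h hT' τ₁' τ₂']
      simp only at heq
      rw [heq]
    have hblocks := (Equiv.permCongr (finSumFinEquivOfAdd h)).injective (mul_left_cancel heq)
    obtain ⟨rfl, rfl⟩ := Prod.ext_iff.mp (Perm.sumCongrHom_injective (α := Fin a) (β := Fin b)
      (a₁ := (τ₁, τ₂)) (a₂ := (τ₁', τ₂')) hblocks)
    rfl
  · simp only [Fintype.card_prod, Fintype.card_perm, Fintype.card_finset_len, Fintype.card_fin,
      ← mul_assoc]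
    have := Nat.choose_mul_factorial_mul_factorial (Nat.le_add_right a b)
    rwa [Nat.add_sub_cancel_left, h] at this

end Shuffle

section PairSum

variable {α A : Type*} [Ring A] (G : α → α → A)

def pairProd {m : ℕ} (f : Fin (2 * m) → α) : A :=
  (List.ofFn fun t : Fin m => G (f ⟨2 * t, by omega⟩) (f ⟨2 * t + 1, by omega⟩)).prod

def pfSum {m : ℕ} (f : Fin (2 * m) → α) : A :=
  ∑ σ : Perm (Fin (2 * m)), (Perm.sign σ : ℤ) • pairProd G (f ∘ σ)

variable {p q : ℕ}

lemma pairProd_split (f : Fin (2 * (p + q)) → α) :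
    pairProd G f =
      pairProd G (f ∘ finSumFinEquivOfAdd (mul_add 2 p q).symm ∘ .inl) *
        pairProd G (f ∘ finSumFinEquivOfAdd (mul_add 2 p q).symm ∘ .inr) := by
  rw [pairProd, List.ofFn_add, List.prod_append]
  congr 3
  funext t
  congr 2 <;> ext <;> simp only [Function.comp_apply, finSumFinEquivOfAdd_inr, Fin.natAdd] <;> ring

lemma pfSum_split (f : Fin (2 * (p + q)) → α) :
    pfSum G f = ∑ T : {T : Finset (Fin (2 * (p + q))) // #T = 2 * p},
      (Perm.sign (shufflePerm (mul_add 2 p q).symm T.2) : ℤ) •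
        (pfSum G (f ∘ T.1.orderEmbOfFin T.2) *
          pfSum G (f ∘ (T.1)ᶜ.orderEmbOfFin (card_compl_eq_of_add (mul_add 2 p q).symm T.2))) := by
  set h := (mul_add 2 p q).symm
  rw [pfSum, ← Fintype.sum_bijective _ (bijective_blockShuffle h) _ _ fun _ => rfl,
    Fintype.sum_prod_type]
  refine sum_congr rfl fun ⟨T, hT⟩ _ => ?_
  simp only [pfSum, sum_mul_sum, smul_sum, Fintype.sum_prod_type]
  refine sum_congr rfl fun τ₁ _ => sum_congr rfl fun τ₂ _ => ?_
  have hleft : f ∘ blockShuffle h hT τ₁ τ₂ ∘ finSumFinEquivOfAdd h ∘ .inl =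
      f ∘ T.orderEmbOfFin hT ∘ τ₁ := funext fun u => congrArg f (blockShuffle_inl h hT τ₁ τ₂ u)
  have hright : f ∘ blockShuffle h hT τ₁ τ₂ ∘ finSumFinEquivOfAdd h ∘ .inr =
      f ∘ Tᶜ.orderEmbOfFin (card_compl_eq_of_add h hT) ∘ τ₂ :=
    funext fun v => congrArg f (blockShuffle_inr h hT τ₁ τ₂ v)
  rw [pairProd_split]
  simp only [Function.comp_assoc] at hleft hright ⊢
  rw [hleft, hright, sign_blockShuffle, smul_mul_smul_comm, smul_smul]
  push_cast
  rfl

end PairSum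

section Enumerations

variable {α β : Type*}

lemma Finset.sort_eq_ofFn_orderEmbOfFin [LinearOrder α] (S : Finset α) {k : ℕ} (hS : #S = k) :
    S.sort (· ≤ ·) = List.ofFn (S.orderEmbOfFin hS) := by
  rw [List.ofFn_eq_map, listMap_orderEmbOfFin_finRange]

lemma Finset.orderEmbOfFin_map [LinearOrder α] [LinearOrder β] (S : Finset α) (e : α ↪o β)
    {k : ℕ} (hS : #S = k) (h : #(S.map e.toEmbedding) = k) :
    ⇑((S.map e.toEmbedding).orderEmbOfFin h) = e ∘ S.orderEmbOfFin hS :=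
  (orderEmbOfFin_unique h (fun x => mem_map_of_mem _ (orderEmbOfFin_mem S hS x))
    (e.strictMono.comp (S.orderEmbOfFin hS).strictMono)).symm

lemma Finset.sum_powersetCard_eq_sum_map {M : Type*} [AddCommMonoid M] [Fintype α] (e : α ↪ β)
    {I : Finset β} (hI : univ.map e = I) (a : ℕ) (g : Finset β → M) :
    ∑ I' ∈ I.powersetCard a, g I' = ∑ T : {T : Finset α // #T = a}, g (T.1.map e) := by
  subst hI
  rw [powersetCard_map, sum_map,
    sum_subtype (p := fun T : Finset α => #T = a) _ fun T => by simp [mem_powersetCard]]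
  rfl

end Enumerations

lemma shuffleSign_map {ι : Type*} [LinearOrder ι] {a b n : ℕ} (h : a + b = n)
    {T : Finset (Fin n)} (hT : #T = a) (e : Fin n ↪o ι) :
    shuffleSign (T.map e.toEmbedding) (Tᶜ.map e.toEmbedding) = Perm.sign (shufflePerm h hT) := by
  have hTc := card_compl_eq_of_add h hT
  rw [shuffleSign, sort_eq_ofFn_orderEmbOfFin _ (by simpa using hT),
    sort_eq_ofFn_orderEmbOfFin _ (by simpa using hTc), orderEmbOfFin_map _ _ hT,
    orderEmbOfFin_map _ _ hTc, ← ofFn_comp_shufflePerm h, arrSign_ofFn_comp_perm e.strictMono]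

section Pfaffian

variable {A : Type*} [Ring A] [Algebra ℚ A] {n : ℕ} (F : Idx n → Idx n → A)

lemma pfSet_eq_smul_pfSum {I : Finset (Idx n)} {m : ℕ} (hI : #I = 2 * m) :
    PfSet F I = ((m.factorial : ℚ) * 2 ^ m)⁻¹ •
      pfSum (fun i j => F i.neg j) (I.orderEmbOfFin hI) := by
  obtain rfl : m = #I / 2 := by omega
  rfl

lemma pfSet_map_eq_smul_pfSum {α : Type*} [LinearOrder α] (S : Finset α) (e : α ↪o Idx n)
    {k : ℕ} (hS : #S = 2 * k) :
    PfSet F (S.map e.toEmbedding) = ((k.factorial : ℚ) * 2 ^ k)⁻¹ •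
      pfSum (fun i j => F i.neg j) (e ∘ S.orderEmbOfFin hS) := by
  rw [pfSet_eq_smul_pfSum F (by simpa using hS), orderEmbOfFin_map _ _ hS]

end Pfaffian

theorem statement8_general {A : Type*} [Ring A] [Algebra ℚ A] (n : ℕ)
    (F : Idx n → Idx n → A)
    (I : Finset (Idx n)) (m p2 q2 : ℕ) (hI : I.card = 2 * m) (hpq : p2 + q2 = m) :
    PfSet F I =
      ((p2.factorial * q2.factorial : ℚ) / (m.factorial : ℚ)) •
        ∑ I' ∈ I.powerset.filter fun s => s.card = 2 * p2,
          (shuffleSign I' (I \ I') : ℤ) • (PfSet F I' * PfSet F (I \ I')) := by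
  subst hpq
  set e := I.orderEmbOfFin hI
  have hIe : univ.map e.toEmbedding = I := map_orderEmbOfFin_univ I hI
  have hterm : ∀ T : {T : Finset (Fin (2 * (p2 + q2))) // #T = 2 * p2},
      (shuffleSign (T.1.map e.toEmbedding) (I \ T.1.map e.toEmbedding) : ℤ) •
          (PfSet F (T.1.map e.toEmbedding) * PfSet F (I \ T.1.map e.toEmbedding)) =
        (((p2.factorial : ℚ) * 2 ^ p2)⁻¹ * ((q2.factorial : ℚ) * 2 ^ q2)⁻¹) •
          ((Perm.sign (shufflePerm (mul_add 2 p2 q2).symm T.2) : ℤ) •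
            (pfSum (fun i j => F i.neg j) (e ∘ T.1.orderEmbOfFin T.2) *
              pfSum (fun i j => F i.neg j)
                (e ∘ (T.1)ᶜ.orderEmbOfFin (card_compl_eq_of_add (mul_add 2 p2 q2).symm T.2)))) := by
    intro ⟨T, hT⟩
    rw [← hIe, ← Finset.map_sdiff, ← compl_eq_univ_sdiff, shuffleSign_map (mul_add 2 p2 q2).symm hT,
      pfSet_map_eq_smul_pfSum F _ _ hT,
      pfSet_map_eq_smul_pfSum F _ _ (card_compl_eq_of_add (mul_add 2 p2 q2).symm hT),
      smul_mul_smul_comm, smul_comm]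
  rw [pfSet_eq_smul_pfSum F hI, pfSum_split, ← powersetCard_eq_filter,
    sum_powersetCard_eq_sum_map _ hIe, sum_congr rfl fun T _ => hterm T, ← smul_sum, smul_smul]
  congr 1
  field_simp
  ring

/-- the splitting formula
`Pf F_I = (p/2)!(q/2)!/(k/2)! ∑_{I = I'⊔I'', |I'|=p, |I''|=q} (-1)^{(I'I'')} Pf F_{I'} Pf F_{I''}`,
where `p = 2 p₂`, `q = 2 q₂` are fixed even numbers with `p + q = k = |I|`. -/
theorem statement8 {A : Type*} [Ring A] [Algebra ℚ A] (n : ℕ)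
    (F : Idx n → Idx n → A) (hrel : OrthRel F) (hskew : OrthSkew F)
    (I : Finset (Idx n)) (m p2 q2 : ℕ) (hI : I.card = 2 * m) (hpq : p2 + q2 = m) :
    PfSet F I =
      ((p2.factorial * q2.factorial : ℚ) / (m.factorial : ℚ)) •
        ∑ I' ∈ I.powerset.filter fun s => s.card = 2 * p2,
          (shuffleSign I' (I \ I') : ℤ) • (PfSet F I' * PfSet F (I \ I')) :=
  statement8_general n F I m p2 q2 hI hpq
end

section
/- In the universal enveloping algebra $U(\mathfrak{o}_5)$ (quasi-spin realization), the pfaffian $\mathrm{Pf}\,F_{\widehat{2}} = \mathrm{Pf}\,F_{\{-2,-1,0,1\}}$ equals $A(-1)\star\frac{\tau_+}{\sqrt{2}} + A(0)\star\tau_0 + A(1)\star\frac{\tau_-}{\sqrt{2}}$, where $a\star b = \frac{1}{2}(ab+ba)$, under the identification $F_{0,-1} = \tau_+/\sqrt{2}$, $F_{-1,-2} = A(-1)$, $F_{0,-2} = A(0)$, $F_{2,-1} = -A(1)$, $F_{-1,-1} = -\tau_0$, $F_{-1,0} = \tau_- /\sqrt{2}$. -/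
open scoped BigOperators

/-- An explicit element of the index set `{-2,…,2}` of `o₅`. -/
def i2 (z : ℤ) (h : z ∈ Finset.Icc (-(2 : ℕ) : ℤ) ((2 : ℕ) : ℤ) := by decide) : Idx 2 := ⟨z, h⟩

/-- The symmetrized product `a ⋆ b = (ab + ba)/2`. -/
noncomputable def symProd {A : Type*} [Ring A] [Algebra ℚ A] (a b : A) : A :=
  (2 : ℚ)⁻¹ • (a * b + b * a)


open Equiv in
lemma perm4_expand {M : Type*} [AddCommGroup M]
    (G : Fin (2*2) → Fin (2*2) → Fin (2*2) → Fin (2*2) → M) :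
    ∑ σ : Equiv.Perm (Fin (2*2)),
        (Equiv.Perm.sign σ : ℤ) • G (σ 0) (σ 1) (σ ⟨2, by omega⟩) (σ ⟨3, by omega⟩) =
      G 0 1 ⟨2, by omega⟩ ⟨3, by omega⟩ + -G 0 1 ⟨3, by omega⟩ ⟨2, by omega⟩ +
        (-G 0 ⟨2, by omega⟩ 1 ⟨3, by omega⟩ + G 0 ⟨2, by omega⟩ ⟨3, by omega⟩ 1 +
          (-G 0 ⟨3, by omega⟩ ⟨2, by omega⟩ 1 + G 0 ⟨3, by omega⟩ 1 ⟨2, by omega⟩)) +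
      (-G 1 0 ⟨2, by omega⟩ ⟨3, by omega⟩ + G 1 0 ⟨3, by omega⟩ ⟨2, by omega⟩ +
          (G 1 ⟨2, by omega⟩ 0 ⟨3, by omega⟩ + -G 1 ⟨2, by omega⟩ ⟨3, by omega⟩ 0 +
            (G 1 ⟨3, by omega⟩ ⟨2, by omega⟩ 0 + -G 1 ⟨3, by omega⟩ 0 ⟨2, by omega⟩)) +
        (-G ⟨2, by omega⟩ 1 0 ⟨3, by omega⟩ + G ⟨2, by omega⟩ 1 ⟨3, by omega⟩ 0 +
            (G ⟨2, by omega⟩ 0 1 ⟨3, by omega⟩ + -G ⟨2, by omega⟩ 0 ⟨3, by omega⟩ 1 +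
              (G ⟨2, by omega⟩ ⟨3, by omega⟩ 0 1 + -G ⟨2, by omega⟩ ⟨3, by omega⟩ 1 0)) +
          (-G ⟨3, by omega⟩ 1 ⟨2, by omega⟩ 0 + G ⟨3, by omega⟩ 1 0 ⟨2, by omega⟩ +
            (G ⟨3, by omega⟩ ⟨2, by omega⟩ 1 0 + -G ⟨3, by omega⟩ ⟨2, by omega⟩ 0 1 +
              (G ⟨3, by omega⟩ 0 ⟨2, by omega⟩ 1 + -G ⟨3, by omega⟩ 0 1 ⟨2, by omega⟩))))) := by
  show ∑ σ : Equiv.Perm (Fin 4), (Equiv.Perm.sign σ : ℤ) • G (σ 0) (σ 1) (σ 2) (σ 3) = _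
  have e1 : (Equiv.swap (0:Fin 3) 1) ⟨2, by omega⟩ = ⟨2, by omega⟩ := by decide
  have e2 : (Equiv.swap (0:Fin 3) ⟨2, by omega⟩) 1 = 1 := by decide
  rw [← Equiv.sum_comp Equiv.Perm.decomposeFin.symm]
  rw [Fintype.sum_prod_type]
  simp only [← Equiv.sum_comp (Equiv.Perm.decomposeFin.symm : Fin 3 × Perm (Fin 2) ≃ _),
    Fintype.sum_prod_type]
  simp only [← Equiv.sum_comp (Equiv.Perm.decomposeFin.symm : Fin 2 × Perm (Fin 1) ≃ _),
    Fintype.sum_prod_type]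
  simp only [Fin.sum_univ_succ, Fin.sum_univ_zero, Finset.univ_unique, Finset.sum_singleton,
    show (3:Fin 4) = (2:Fin 3).succ from rfl, show (2:Fin 4) = (1:Fin 3).succ from rfl,
    show (1:Fin 4) = (0:Fin 3).succ from rfl]
  simp only [Equiv.Perm.decomposeFin.symm_sign, Equiv.Perm.decomposeFin_symm_apply_zero,
    Equiv.Perm.decomposeFin_symm_apply_succ]
  simp only [show (2:Fin 3) = (1:Fin 2).succ from rfl, show (1:Fin 3) = (0:Fin 2).succ from rfl]
  simp only [Equiv.Perm.decomposeFin_symm_apply_zero, Equiv.Perm.decomposeFin_symm_apply_succ]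
  simp only [show (1:Fin 2) = (0:Fin 1).succ from rfl]
  simp (config := { decide := true }) only [Equiv.Perm.decomposeFin_symm_apply_zero,
    Equiv.Perm.decomposeFin_symm_apply_succ, Equiv.Perm.sign_one, default,
    Equiv.swap_apply_def, Equiv.refl_apply, Fin.succ, e1, e2]
  norm_num [e1, e2]

/-- The increasing enumeration of `{-2,-1,0,1}`. -/
noncomputable def E4 : Fin (2*2) → Idx 2 := fun t =>
  (({i2 (-2), i2 (-1), i2 0, i2 1} : Finset (Idx 2)).orderIsoOfFin rfl ⟨t.1, by
    have h1 := t.2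
    have h2 : ({i2 (-2), i2 (-1), i2 0, i2 1} : Finset (Idx 2)).card = 4 := by decide
    omega⟩).1

/-- in `U(o₅)`,
`Pf F_{2̂} = A(-1) ⋆ (τ₊/√2) + A(0) ⋆ τ₀ + A(1) ⋆ (τ₋/√2)` where, under the quasi-spin
identification, `τ₊/√2 = F_{0,-1}`, `A(-1) = F_{-1,-2}`, `A(0) = F_{0,-2}`, `A(1) = -F_{2,-1}`,
`τ₀ = -F_{-1,-1}`, `τ₋/√2 = F_{-1,0}`. -/
theorem statement12 {A : Type*} [Ring A] [Algebra ℚ A]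
    (F : Idx 2 → Idx 2 → A) (hrel : OrthRel F) (hskew : OrthSkew F) :
    PfSet F {i2 (-2), i2 (-1), i2 0, i2 1} =
      symProd (F (i2 (-1)) (i2 (-2))) (F (i2 0) (i2 (-1)))
        + symProd (F (i2 0) (i2 (-2))) (-(F (i2 (-1)) (i2 (-1))))
        + symProd (-(F (i2 2) (i2 (-1)))) (F (i2 (-1)) (i2 0)) := by
  clear hrel
  have hsort : ({i2 (-2), i2 (-1), i2 0, i2 1} : Finset (Idx 2)).sort (· ≤ ·)
      = [i2 (-2), i2 (-1), i2 0, i2 1] := by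
    rw [Finset.sort_insert, Finset.sort_insert, Finset.sort_insert, Finset.sort_singleton]
      <;> decide
  have hE : ∀ j : Fin (2*2), E4 j = [i2 (-2), i2 (-1), i2 0, i2 1].get (Fin.cast (by simp) j) := by
    intro j
    unfold E4
    rw [Finset.coe_orderIsoOfFin_apply, Finset.orderEmbOfFin_apply]
    simp only [hsort]
    rfl
  have hE0 : E4 0 = i2 (-2) := by rw [hE]; decide
  have hE1 : E4 1 = i2 (-1) := by rw [hE]; decide
  have hE2 : E4 ⟨2, by omega⟩ = i2 0 := by rw [hE]; decide
  have hE3 : E4 ⟨3, by omega⟩ = i2 1 := by rw [hE]; decide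
  show ((Nat.factorial 2 : ℚ) * 2 ^ 2)⁻¹ •
      ∑ σ : Equiv.Perm (Fin (2*2)),
        (Equiv.Perm.sign σ : ℤ) •
          (F (Idx.neg (E4 (σ 0))) (E4 (σ 1))
            * (F (Idx.neg (E4 (σ ⟨2, by omega⟩))) (E4 (σ ⟨3, by omega⟩)) * 1)) = _
  rw [perm4_expand (fun a b c d : Fin (2*2) =>
    F (Idx.neg (E4 a)) (E4 b) * (F (Idx.neg (E4 c)) (E4 d) * 1))]
  simp only [hE0, hE1, hE2, hE3, mul_one]
  have n1 : Idx.neg (i2 (-2)) = i2 2 := rfl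
  have n2 : Idx.neg (i2 (-1)) = i2 1 := rfl
  have n3 : Idx.neg (i2 0) = i2 0 := rfl
  have n4 : Idx.neg (i2 1) = i2 (-1) := rfl
  have n5 : Idx.neg (i2 2) = i2 (-2) := rfl
  have hsa := hskew (i2 2) (i2 0)
  have hsb := hskew (i2 2) (i2 1)
  have hsc := hskew (i2 1) (i2 (-2))
  have hsd := hskew (i2 1) (i2 0)
  have hse := hskew (i2 1) (i2 1)
  have hsf := hskew (i2 0) (i2 1)
  simp only [n1, n2, n3, n4, n5] at hsa hsb hsc hsd hse hsf ⊢
  rw [hsa, hsb, hsc, hsd, hse, hsf]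
  simp only [symProd, Nat.factorial]
  push_cast
  simp only [neg_mul, mul_neg, neg_neg]
  module
end
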